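/- Let V be a set of n points chosen independently and uniformly at random from the unit square [0,1]². Then with probability tending to 1 as n → ∞, the weight of the minimum spanning tree of V is Ω(√n); concretely, there exist constants c > 0 and n₀ such that for n ≥ n₀, P(ω(MST(V)) ≥ c√n) ≥ 1 − 1/n. -/

import Mathlib

open scoped Classical
open MeasureTheory

/-- The weight of a minimum spanning tree of the points `x 0, …, x (n-1)` of a
metric space: the infimum, over all connected graphs on the index set, of the
total weight of the edges (weighted by the metric distances). -/
noncomputable def mstWeight {n : ℕ} {E : Type*} [MetricSpace E]
    (x : Fin n → E) : ℝ :=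
  sInf { W : ℝ | ∃ G : SimpleGraph (Fin n), G.Connected ∧
    W = ∑ e : Sym2 (Fin n),
      if e ∈ G.edgeSet then
        Sym2.lift ⟨fun a b => dist (x a) (x b),
          fun a b => dist_comm (x a) (x b)⟩ e
      else 0 }

/-- The unit square in the Euclidean plane. -/
def unitSquare : Set (EuclideanSpace ℝ (Fin 2)) :=
  {p | ∀ i : Fin 2, p i ∈ Set.Icc (0:ℝ) 1}

/-!
Cut the unit square into a `k × k` grid with `k ≈ √n / 10` and call the middle subsquare of
side `1 / (3k)` of each cell its core. A point in a core is at distance at least `1 / (3k)` from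
every other cell, so in any connected graph on the points the edges touching the cell of an
occupied core have total length at least `1 / (3k)` (follow a path to a point in another cell
until it first leaves). An edge touches at most two cells, hence every spanning graph weighs at
least `(number of occupied cores) / (6k)`, which is `≥ k / 12` once at least half the cores are
occupied. Any fixed half of the cores has mass `≥ 1 / 18`, so all `n` points avoid it with
probability `≤ (17/18)^n`; a union bound over the `≤ 2^(k²)` choices of such a half costs
`2^(k²) (17/18)^n ≤ (35/36)^n ≤ 1 / n`, because `k² ≤ n / 100`.
-/

open Finset SimpleGraph

section GraphWeight

variable {E : Type*} [MetricSpace E] {N : ℕ} (x : Fin N → E)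

noncomputable def edgeLength : Sym2 (Fin N) → ℝ :=
  Sym2.lift ⟨fun a b => dist (x a) (x b), fun a b => dist_comm (x a) (x b)⟩

noncomputable def graphWeight (G : SimpleGraph (Fin N)) : ℝ :=
  ∑ e, if e ∈ G.edgeSet then edgeLength x e else 0

noncomputable def incidentWeight (G : SimpleGraph (Fin N)) (S : Set E) : ℝ :=
  ∑ e with e ∈ G.edgeSet ∧ ∃ v ∈ e, x v ∈ S, edgeLength x e

@[simp]
theorem edgeLength_mk (a b : Fin N) : edgeLength x s(a, b) = dist (x a) (x b) := rfl

theorem edgeLength_nonneg (e : Sym2 (Fin N)) : 0 ≤ edgeLength x e := by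
  induction e using Sym2.ind with
  | _ a b => exact dist_nonneg

theorem le_mstWeight [Nonempty (Fin N)] {b : ℝ}
    (h : ∀ G : SimpleGraph (Fin N), G.Connected → b ≤ graphWeight x G) : b ≤ mstWeight x :=
  le_csInf ⟨_, ⊤, connected_top, rfl⟩ (by rintro _ ⟨G, hG, rfl⟩; exact h G hG)

/-- Along a trail leaving `S`, the edges travelled before the first exit all touch `S`, so
the triangle inequality bounds the distance to the exit point by their total length. -/
theorem exists_exit_dist_le {G : SimpleGraph (Fin N)} (S : Set E) :
    ∀ {a b : Fin N} (W : G.Walk a b), W.IsTrail → x b ∉ S →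
      ∃ c, x c ∉ S ∧
        dist (x a) (x c) ≤ ∑ e ∈ W.edges.toFinset with ∃ v ∈ e, x v ∈ S, edgeLength x e
  | _, _, .nil, _, hb => ⟨_, hb, by simp⟩
  | u, _, .cons (v := v) huv W, hW, hb => by
    rw [Walk.isTrail_cons] at hW
    by_cases hu : x u ∈ S
    · obtain ⟨c, hc, hdist⟩ := exists_exit_dist_le S W hW.1 hb
      refine ⟨c, hc, ?_⟩
      have hnew : s(u, v) ∉ {e ∈ W.edges.toFinset | ∃ w ∈ e, x w ∈ S} := by simp [hW.2]
      rw [Walk.edges_cons, List.toFinset_cons, filter_insert,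
        if_pos ⟨u, Sym2.mem_mk_left u v, hu⟩, sum_insert hnew, edgeLength_mk]
      linarith [dist_triangle (x u) (x v) (x c)]
    · exact ⟨u, hu, by simpa using sum_nonneg fun e _ => edgeLength_nonneg x e⟩

theorem le_incidentWeight {G : SimpleGraph (Fin N)} (hG : G.Connected) {S : Set E} {t : ℝ}
    {a b : Fin N} (hsep : ∀ q ∉ S, t ≤ dist (x a) q) (hb : x b ∉ S) :
    t ≤ incidentWeight x G S := by
  let W := (hG.preconnected a b).some.toPath
  obtain ⟨c, hc, hdist⟩ := exists_exit_dist_le x S W.1 W.2.isTrail hb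
  refine (hsep _ hc).trans (hdist.trans (sum_le_sum_of_subset_of_nonneg ?_ ?_))
  · intro e he
    simp only [mem_filter, List.mem_toFinset, mem_univ, true_and] at he ⊢
    exact ⟨Walk.edges_subset_edgeSet _ he.1, he.2⟩
  · exact fun e _ _ => edgeLength_nonneg x e

/-- An edge has two endpoints, so it is incident to at most two fibres of `cell`. -/
theorem sum_incidentWeight_fiber_le {κ : Type*} (cell : E → κ) (G : SimpleGraph (Fin N))
    (D : Finset κ) :
    ∑ c ∈ D, incidentWeight x G (cell ⁻¹' {c}) ≤ 2 * graphWeight x G := by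
  simp only [incidentWeight, graphWeight, sum_filter, mul_sum]
  rw [sum_comm]
  refine sum_le_sum fun e _ => ?_
  split_ifs with he
  · rw [← sum_filter, sum_const, nsmul_eq_mul]
    refine mul_le_mul_of_nonneg_right ?_ (edgeLength_nonneg x e)
    induction e using Sym2.ind with
    | _ a b =>
      have hsub :
          {c ∈ D | s(a, b) ∈ G.edgeSet ∧ ∃ v ∈ s(a, b), x v ∈ cell ⁻¹' {c}} ⊆
            {cell (x a), cell (x b)} := by
        intro c hc
        simp only [mem_filter, Sym2.mem_iff, exists_eq_or_imp, exists_eq_left,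
          Set.mem_preimage, Set.mem_singleton_iff] at hc
        rcases hc.2.2 with h | h <;> simp [h]
      exact_mod_cast (card_le_card hsub).trans card_le_two
  · simp [he]

theorem mul_card_le_two_mul_graphWeight {κ : Type*} (cell : E → κ)
    {G : SimpleGraph (Fin N)} (hG : G.Connected) {t : ℝ} (D : Finset κ) (hD : 2 ≤ #D)
    (hdeep : ∀ c ∈ D, ∃ i, cell (x i) = c ∧ ∀ q, cell q ≠ c → t ≤ dist (x i) q) :
    t * #D ≤ 2 * graphWeight x G := by
  have hcut : ∀ c ∈ D, t ≤ incidentWeight x G (cell ⁻¹' {c}) := by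
    intro c hc
    obtain ⟨i, -, hsep⟩ := hdeep c hc
    obtain ⟨d, hd, hdc⟩ := exists_mem_ne hD c
    obtain ⟨j, hj, -⟩ := hdeep d hd
    exact le_incidentWeight x hG (b := j) hsep (by simpa [hj] using hdc)
  calc t * #D = ∑ _c ∈ D, t := by rw [sum_const, nsmul_eq_mul, mul_comm]
    _ ≤ ∑ c ∈ D, incidentWeight x G (cell ⁻¹' {c}) := sum_le_sum hcut
    _ ≤ 2 * graphWeight x G := sum_incidentWeight_fiber_le x cell G D

end GraphWeight

section Grid

variable {ι : Type*}

theorem EuclideanSpace.box_eq_preimage (I : ι → Set ℝ) :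
    {p : EuclideanSpace ℝ ι | ∀ i, p i ∈ I i} =
      (MeasurableEquiv.toLp 2 (ι → ℝ)).symm ⁻¹' Set.univ.pi I := by
  ext p; simp

theorem EuclideanSpace.volume_box [Fintype ι] (I : ι → Set ℝ) :
    volume {p : EuclideanSpace ℝ ι | ∀ i, p i ∈ I i} = ∏ i, volume (I i) := by
  rw [← volume_pi_pi, EuclideanSpace.box_eq_preimage]
  exact (EuclideanSpace.volume_preserving_symm_measurableEquiv_toLp ι).measure_preimage_equiv
    (Set.univ.pi I)

theorem EuclideanSpace.measurableSet_box [Fintype ι] {I : ι → Set ℝ}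
    (hI : ∀ i, MeasurableSet (I i)) :
    MeasurableSet {p : EuclideanSpace ℝ ι | ∀ i, p i ∈ I i} :=
  EuclideanSpace.box_eq_preimage I ▸
    (MeasurableEquiv.toLp 2 (ι → ℝ)).symm.measurable (MeasurableSet.univ_pi hI)

variable (k : ℕ)

noncomputable def cellIndex (p : EuclideanSpace ℝ ι) : ι → ℤ := fun i => ⌊k * p i⌋

/-- The middle subcube of side `1 / (3k)` of the cell `j` of the `k × ⋯ × k` grid on the
unit cube. -/
def core (j : ι → Fin k) : Set (EuclideanSpace ℝ ι) :=
  {p | ∀ i, p i ∈ Set.Ico ((3 * j i + 1 : ℝ) / (3 * k)) ((3 * j i + 2 : ℝ) / (3 * k))}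

variable {k}

theorem mem_core_iff (hk : 0 < k) {j : ι → Fin k} {p : EuclideanSpace ℝ ι} :
    p ∈ core k j ↔ ∀ i, (j i : ℝ) + 1 / 3 ≤ k * p i ∧ k * p i < j i + 2 / 3 := by
  have hk' : (0 : ℝ) < 3 * k := by positivity
  refine forall_congr' fun i => ?_
  rw [Set.mem_Ico, div_le_iff₀ hk', lt_div_iff₀ hk']
  constructor <;> rintro ⟨h₁, h₂⟩ <;> constructor <;> linarith

theorem cellIndex_of_mem_core (hk : 0 < k) {j : ι → Fin k} {p : EuclideanSpace ℝ ι}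
    (hp : p ∈ core k j) : cellIndex k p = fun i => (j i : ℤ) := by
  funext i
  obtain ⟨h₁, h₂⟩ := (mem_core_iff hk).1 hp i
  rw [cellIndex, Int.floor_eq_iff]
  push_cast
  constructor <;> linarith

theorem le_dist_of_mem_core [Fintype ι] (hk : 0 < k) {j : ι → Fin k}
    {p q : EuclideanSpace ℝ ι} (hp : p ∈ core k j) (hq : cellIndex k q ≠ cellIndex k p) :
    1 / (3 * k) ≤ dist p q := by
  rw [cellIndex_of_mem_core hk hp] at hq
  obtain ⟨i, hi⟩ := Function.ne_iff.1 hq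
  obtain ⟨h₁, h₂⟩ := (mem_core_iff hk).1 hp i
  have hk' : (0 : ℝ) < k := by exact_mod_cast hk
  have hfar : 1 / 3 ≤ k * |p i - q i| := by
    rw [cellIndex, ne_eq, Int.floor_eq_iff, not_and_or, not_le, not_lt] at hi
    push_cast at hi
    rw [← abs_of_pos hk', ← abs_mul, mul_sub]
    rcases hi with hi | hi
    · exact le_abs.2 (Or.inl (by linarith))
    · exact le_abs.2 (Or.inr (by linarith))
  calc 1 / (3 * k) ≤ |p i - q i| := by
        rw [div_le_iff₀ (by positivity)]; linarith
    _ = dist (p i) (q i) := (Real.dist_eq _ _).symm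
    _ ≤ dist p q := PiLp.dist_apply_le p q i

theorem pairwise_disjoint_core (hk : 0 < k) :
    Pairwise (Function.onFun Disjoint (core (ι := ι) k)) := by
  intro j j' hjj'
  refine Set.disjoint_left.2 fun p hp hp' => hjj' ?_
  have h := (cellIndex_of_mem_core hk hp).symm.trans (cellIndex_of_mem_core hk hp')
  funext i
  exact Fin.ext (by exact_mod_cast congrFun h i)

theorem core_subset_cube (j : ι → Fin k) :
    core k j ⊆ {p | ∀ i, p i ∈ Set.Icc (0 : ℝ) 1} := by
  rcases Nat.eq_zero_or_pos k with rfl | hk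
  · intro p _ i; exact (j i).elim0
  intro p hp i
  obtain ⟨h₁, h₂⟩ := (mem_core_iff hk).1 hp i
  have hj : (j i : ℝ) + 1 ≤ k := by exact_mod_cast (j i).isLt
  have hk' : (0 : ℝ) < k := by exact_mod_cast hk
  constructor
  · nlinarith [Nat.cast_nonneg (α := ℝ) (j i)]
  · nlinarith

theorem measurableSet_core [Fintype ι] (j : ι → Fin k) : MeasurableSet (core k j) :=
  EuclideanSpace.measurableSet_box fun _ => measurableSet_Ico

theorem volume_core [Fintype ι] (j : ι → Fin k) :
    volume (core k j) = ENNReal.ofReal (1 / (3 * k)) ^ Fintype.card ι := by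
  rw [core, EuclideanSpace.volume_box, Fintype.card, ← prod_const]
  refine prod_congr rfl fun i _ => ?_
  rw [Real.volume_Ico]
  congr 1
  ring

end Grid

section RandomPoints

theorem volume_unitSquare : volume unitSquare = 1 := by
  rw [unitSquare, EuclideanSpace.volume_box]
  simp

instance : IsProbabilityMeasure (volume.restrict unitSquare) :=
  ⟨by rw [Measure.restrict_apply_univ, volume_unitSquare]⟩

/-- The event that at least half of the `k²` cores contain none of the points. -/
def halfCoresEmpty (n k : ℕ) : Set (Fin n → EuclideanSpace ℝ (Fin 2)) :=
  ⋃ T ∈ ({T | k ^ 2 ≤ 2 * #T} : Finset (Finset (Fin 2 → Fin k))),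
    Set.univ.pi fun _ => (⋃ j ∈ T, core k j)ᶜ

variable {n k : ℕ}

theorem measurableSet_halfCoresEmpty : MeasurableSet (halfCoresEmpty n k) :=
  Finset.measurableSet_biUnion _ fun T _ => MeasurableSet.univ_pi fun _ =>
    (Finset.measurableSet_biUnion T fun j _ => measurableSet_core j).compl

theorem restrict_unitSquare_biUnion_core (hk : 0 < k) (T : Finset (Fin 2 → Fin k)) :
    volume.restrict unitSquare (⋃ j ∈ T, core k j) =
      #T * ENNReal.ofReal (1 / (3 * k)) ^ 2 := by
  have hsub : (⋃ j ∈ T, core k j) ⊆ unitSquare :=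
    Set.iUnion₂_subset fun j _ => core_subset_cube j
  rw [Measure.restrict_apply (T.measurableSet_biUnion fun j _ => measurableSet_core j),
    Set.inter_eq_left.2 hsub,
    measure_biUnion_finset ((pairwise_disjoint_core hk).set_pairwise _)
      fun j _ => measurableSet_core j]
  simp [volume_core]

theorem restrict_unitSquare_compl_biUnion_core_le (hk : 0 < k) {T : Finset (Fin 2 → Fin k)}
    (hT : k ^ 2 ≤ 2 * #T) :
    volume.restrict unitSquare (⋃ j ∈ T, core k j)ᶜ ≤ ENNReal.ofReal (17 / 18) := by
  have hk' : (0 : ℝ) < k := by exact_mod_cast hk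
  have hT' : (k : ℝ) ^ 2 ≤ 2 * #T := by exact_mod_cast hT
  have hmass : ENNReal.ofReal (1 / 18) ≤ volume.restrict unitSquare (⋃ j ∈ T, core k j) := by
    rw [restrict_unitSquare_biUnion_core hk, ← ENNReal.ofReal_natCast, ← ENNReal.ofReal_pow
      (by positivity), ← ENNReal.ofReal_mul (by positivity)]
    refine ENNReal.ofReal_le_ofReal ?_
    rw [div_pow, one_pow, mul_pow, ← mul_div_assoc, mul_one, le_div_iff₀ (by positivity)]
    nlinarith
  rw [prob_compl_eq_one_sub (T.measurableSet_biUnion fun j _ => measurableSet_core j)]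
  calc 1 - volume.restrict unitSquare (⋃ j ∈ T, core k j) ≤ 1 - ENNReal.ofReal (1 / 18) :=
        tsub_le_tsub_left hmass 1
    _ = ENNReal.ofReal (17 / 18) := by
        rw [← ENNReal.ofReal_one, ← ENNReal.ofReal_sub _ (by norm_num)]; norm_num

theorem measure_halfCoresEmpty_le (hk : 0 < k) :
    Measure.pi (fun _ : Fin n => volume.restrict unitSquare) (halfCoresEmpty n k) ≤
      2 ^ (k ^ 2) * ENNReal.ofReal (17 / 18) ^ n := by
  calc _ ≤ ∑ T ∈ ({T | k ^ 2 ≤ 2 * #T} : Finset (Finset (Fin 2 → Fin k))),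
        Measure.pi (fun _ : Fin n => volume.restrict unitSquare)
          (Set.univ.pi fun _ => (⋃ j ∈ T, core k j)ᶜ) := measure_biUnion_finset_le _ _
    _ ≤ ∑ _T ∈ ({T | k ^ 2 ≤ 2 * #T} : Finset (Finset (Fin 2 → Fin k))),
        ENNReal.ofReal (17 / 18) ^ n := by
      refine sum_le_sum fun T hT => ?_
      rw [Measure.pi_pi, prod_const, card_univ, Fintype.card_fin]
      exact pow_le_pow_left₀ bot_le
        (restrict_unitSquare_compl_biUnion_core_le hk (mem_filter.1 hT).2) n
    _ ≤ 2 ^ (k ^ 2) * ENNReal.ofReal (17 / 18) ^ n := by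
      rw [sum_const, nsmul_eq_mul]
      gcongr
      calc (#_ : ENNReal) ≤ #(univ : Finset (Finset (Fin 2 → Fin k))) := by
            exact_mod_cast card_filter_le _ _
        _ = 2 ^ (k ^ 2) := by simp [Fintype.card_finset]

theorem div_le_mstWeight_of_notMem_halfCoresEmpty (hk : 2 ≤ k)
    {x : Fin n → EuclideanSpace ℝ (Fin 2)} (hx : x ∉ halfCoresEmpty n k) :
    k / 12 ≤ mstWeight x := by
  have hk0 : 0 < k := by omega
  set O : Finset (Fin 2 → Fin k) := {j | ∃ i, x i ∈ core k j}
  set D : Finset (Fin 2 → ℤ) := O.image fun j i => (j i : ℤ)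
  have hO : k ^ 2 < 2 * #O := by
    have hT : ¬ k ^ 2 ≤ 2 * #({j | ¬ ∃ i, x i ∈ core k j} : Finset (Fin 2 → Fin k)) := by
      intro hT
      refine hx (Set.mem_biUnion (mem_filter.2 ⟨mem_univ _, hT⟩) fun i _ => ?_)
      simpa using fun j (hj : ∀ m, x m ∉ core k j) => hj i
    have hcard : #O + #({j | ¬ ∃ i, x i ∈ core k j} : Finset (Fin 2 → Fin k)) = k ^ 2 := by
      rw [card_filter_add_card_filter_not]; simp
    omega
  have hD : #D = #O := card_image_of_injective _ fun j j' h =>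
    funext fun i => Fin.ext (by exact_mod_cast congrFun h i)
  have hdeep : ∀ c ∈ D, ∃ i, cellIndex k (x i) = c ∧
      ∀ q, cellIndex k q ≠ c → 1 / (3 * k) ≤ dist (x i) q := by
    intro c hc
    obtain ⟨j, hj, rfl⟩ := mem_image.1 hc
    obtain ⟨i, hi⟩ := (mem_filter.1 hj).2
    rw [← cellIndex_of_mem_core hk0 hi]
    exact ⟨i, rfl, fun q hq => le_dist_of_mem_core hk0 hi hq⟩
  obtain ⟨c, hc⟩ : D.Nonempty := card_pos.1 (by nlinarith)
  obtain ⟨i, -⟩ := hdeep c hc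
  have : Nonempty (Fin n) := ⟨i⟩
  refine le_mstWeight x fun G hG => ?_
  have hweight := mul_card_le_two_mul_graphWeight x (cellIndex k) hG D (by nlinarith) hdeep
  have hk' : (0 : ℝ) < k := by exact_mod_cast hk0
  have hD' : (k : ℝ) ^ 2 ≤ 2 * #D := by rw [hD]; exact_mod_cast hO.le
  calc (k : ℝ) / 12 = 1 / (3 * k) * (k ^ 2 / 2) / 2 := by field_simp; ring
    _ ≤ 1 / (3 * k) * #D / 2 := by gcongr; linarith
    _ ≤ graphWeight x G := by linarith

theorem one_sub_le_measure_div_le_mstWeight (n : ℕ) (hk : 2 ≤ k) :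
    1 - 2 ^ (k ^ 2) * ENNReal.ofReal (17 / 18) ^ n ≤
      Measure.pi (fun _ : Fin n => volume.restrict unitSquare) {x | k / 12 ≤ mstWeight x} :=
  calc 1 - 2 ^ (k ^ 2) * ENNReal.ofReal (17 / 18) ^ n
      ≤ 1 - Measure.pi (fun _ : Fin n => volume.restrict unitSquare) (halfCoresEmpty n k) :=
        tsub_le_tsub_left (measure_halfCoresEmpty_le (by omega)) 1
    _ = Measure.pi (fun _ : Fin n => volume.restrict unitSquare) (halfCoresEmpty n k)ᶜ :=
        (prob_compl_eq_one_sub measurableSet_halfCoresEmpty).symm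
    _ ≤ _ := measure_mono fun _ hx => div_le_mstWeight_of_notMem_halfCoresEmpty hk hx

end RandomPoints

section Numerics

theorem two_pow_mul_pow_le {k n : ℕ} (h : 100 * k ^ 2 ≤ n) :
    (2 : ℝ) ^ (k ^ 2) * (17 / 18) ^ n ≤ (35 / 36) ^ n := by
  have hbase : (2 : ℝ) ≤ (35 / 34) ^ 100 := by
    have := one_add_mul_le_pow (a := (1 / 34 : ℝ)) (by norm_num) 100
    norm_num at this ⊢
  calc (2 : ℝ) ^ (k ^ 2) * (17 / 18) ^ n ≤ ((35 / 34) ^ 100) ^ (k ^ 2) * (17 / 18) ^ n := by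
        gcongr
    _ ≤ (35 / 34) ^ n * (17 / 18) ^ n := by
        rw [← pow_mul]; gcongr; norm_num
    _ = (35 / 36) ^ n := by rw [← mul_pow]; norm_num

theorem two_pow_mul_ofReal_pow_le {k n : ℕ} (hn : 0 < n) (h : 100 * k ^ 2 ≤ n)
    (hdecay : (n : ℝ) * (35 / 36) ^ n ≤ 1) :
    2 ^ (k ^ 2) * ENNReal.ofReal (17 / 18) ^ n ≤ 1 / n := by
  have hn' : (0 : ℝ) < n := by exact_mod_cast hn
  rw [← ENNReal.ofReal_pow (by norm_num), ← ENNReal.ofReal_ofNat 2, ← ENNReal.ofReal_pow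
    (by norm_num), ← ENNReal.ofReal_mul (by positivity), ← ENNReal.ofReal_natCast,
    ← ENNReal.ofReal_one, ← ENNReal.ofReal_div_of_pos hn']
  refine ENNReal.ofReal_le_ofReal ((two_pow_mul_pow_le h).trans ?_)
  rw [le_div_iff₀ hn']
  linarith

end Numerics

open Filter in
/-- For `n` points chosen independently and uniformly at random from the unit
square, with high probability the weight of a minimum spanning tree is
`Ω(√n)`: there are `c > 0` and `n₀` such that for all `n ≥ n₀`, with
probability at least `1 - 1/n` we have `ω(MST) ≥ c·√n`. -/
theorem stmt_15 :
    ∃ c : ℝ, 0 < c ∧ ∃ n₀ : ℕ, ∀ n : ℕ, n₀ ≤ n →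
      (1 : ENNReal) - 1 / n ≤
        Measure.pi (fun _ : Fin n =>
            (volume : Measure (EuclideanSpace ℝ (Fin 2))).restrict unitSquare)
          {x | c * Real.sqrt n ≤ mstWeight x} := by
  refine ⟨1 / 240, by norm_num, ?_⟩
  have hdecay : ∀ᶠ n : ℕ in atTop, (n : ℝ) * (35 / 36) ^ n ≤ 1 :=
    (tendsto_self_mul_const_pow_of_lt_one (by norm_num) (by norm_num)).eventually_le_const
      one_pos
  obtain ⟨n₀, hn₀⟩ := eventually_atTop.1 (hdecay.and (eventually_ge_atTop 400))
  refine ⟨n₀, fun n hn => ?_⟩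
  obtain ⟨hdecay, hn400⟩ := hn₀ n hn
  set k := Nat.sqrt n / 10
  have hs : 20 ≤ Nat.sqrt n := Nat.le_sqrt.2 (by omega)
  have hk : 2 ≤ k := by omega
  have hkn : 100 * k ^ 2 ≤ n := by
    have hsq : Nat.sqrt n ^ 2 ≤ n := Nat.sqrt_le' n
    have hk10 : (10 * k) ^ 2 ≤ Nat.sqrt n ^ 2 := Nat.pow_le_pow_left (by omega) 2
    nlinarith
  have hsqrt : 1 / 240 * Real.sqrt n ≤ k / 12 := by
    have hs20 : (Nat.sqrt n : ℝ) + 1 ≤ 20 * k := by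
      exact_mod_cast (by omega : Nat.sqrt n + 1 ≤ 20 * k)
    linarith [Real.real_sqrt_lt_nat_sqrt_succ (a := n)]
  calc (1 : ENNReal) - 1 / n ≤ 1 - 2 ^ (k ^ 2) * ENNReal.ofReal (17 / 18) ^ n :=
        tsub_le_tsub_left (two_pow_mul_ofReal_pow_le (by omega) hkn hdecay) 1
    _ ≤ _ := one_sub_le_measure_div_le_mstWeight n hk
    _ ≤ _ := measure_mono fun x (hx : (k : ℝ) / 12 ≤ mstWeight x) => hsqrt.trans hx
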